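/- Let R : ℕ → ℝ be nonincreasing with R(0) = 1 and R(d) ≥ 0 for all d. Fix D ≥ 1 and choose indices 0 = d₀ < d₁ < ... < d_k = D by letting d_i be minimal with R(d_i) ≤ 2^{-i} (with d_k = D the last value). Then Σ_{i=1}^{k} R(d_{i-1})·√(d_i - d_{i-1}) ≤ 2√2 · √(Σ_{d=0}^{D-1} R(d)). -/

import Mathlib

/-!
On the `i`-th block `[dᵢ, dᵢ₊₁)` minimality of `dᵢ₊₁` gives `R > 2^{-(i+1)}`, so
`Σᵢ 2^{-i} (dᵢ₊₁ - dᵢ) ≤ 2 Σ_{d<D} R(d)`, while `R(dᵢ) ≤ 2^{-i}`. Cauchy–Schwarz with the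
weights `2^{-i}`, whose total is at most `2`, then bounds the left-hand side by `2 √(Σ_{d<D} R(d))`.
-/

open Finset Real

theorem Real.sum_mul_sqrt_le_sqrt_sum_mul_sqrt_sum {ι : Type*} (s : Finset ι) {w L : ι → ℝ}
    (hw : ∀ i ∈ s, 0 ≤ w i) (hL : ∀ i ∈ s, 0 ≤ L i) :
    ∑ i ∈ s, w i * √(L i) ≤ √(∑ i ∈ s, w i) * √(∑ i ∈ s, w i * L i) := by
  have h := sum_mul_le_sqrt_mul_sqrt s (fun i ↦ √(w i)) (fun i ↦ √(w i * L i))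
  calc ∑ i ∈ s, w i * √(L i) = ∑ i ∈ s, √(w i) * √(w i * L i) :=
        sum_congr rfl fun i hi ↦ by
          rw [sqrt_mul (hw i hi), ← mul_assoc, mul_self_sqrt (hw i hi)]
    _ ≤ √(∑ i ∈ s, √(w i) ^ 2) * √(∑ i ∈ s, √(w i * L i) ^ 2) := h
    _ = √(∑ i ∈ s, w i) * √(∑ i ∈ s, w i * L i) := by
        rw [sum_congr rfl fun i hi ↦ sq_sqrt (hw i hi),
          sum_congr rfl fun i hi ↦ sq_sqrt (mul_nonneg (hw i hi) (hL i hi))]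

theorem mul_sub_le_sum_Ico {R : ℕ → ℝ} {a b : ℕ} (hab : a ≤ b) {c : ℝ}
    (hc : ∀ j ∈ Ico a b, c ≤ R j) :
    c * ((b : ℝ) - a) ≤ ∑ j ∈ Ico a b, R j := by
  have h := card_nsmul_le_sum (Ico a b) R c hc
  rwa [Nat.card_Ico, nsmul_eq_mul, Nat.cast_sub hab, mul_comm] at h

theorem sum_mul_sub_le_sum_Ico {R c : ℕ → ℝ} {d : ℕ → ℕ} (k : ℕ)
    (hd : ∀ i < k, d i ≤ d (i + 1)) (hc : ∀ i < k, ∀ j ∈ Ico (d i) (d (i + 1)), c i ≤ R j) :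
    ∑ i ∈ range k, c i * ((d (i + 1) : ℝ) - d i) ≤ ∑ j ∈ Ico (d 0) (d k), R j := by
  induction k with
  | zero => simp
  | succ k ih =>
    have hd0k : ∀ m ≤ k, d 0 ≤ d m := by
      intro m hm
      induction m with
      | zero => rfl
      | succ m ihm => exact (ihm (by omega)).trans (hd m (by omega))
    rw [sum_range_succ, ← sum_Ico_consecutive R (hd0k k le_rfl) (hd k k.lt_succ_self)]
    exact add_le_add (ih (fun i hi ↦ hd i (by omega)) fun i hi ↦ hc i (by omega))
      (mul_sub_le_sum_Ico (hd k k.lt_succ_self) (hc k k.lt_succ_self))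

theorem subsequence_optimization_general
    (R : ℕ → ℝ)
    (D k : ℕ)
    (d : ℕ → ℕ) (hd0 : d 0 = 0) (hdk : d k = D)
    (hstrict : ∀ i < k, d i < d (i + 1))
    (hle : ∀ i < k, R (d i) ≤ (1 / 2 : ℝ) ^ i)
    (hmin : ∀ i ≤ k, ∀ m < d i, (1 / 2 : ℝ) ^ i < R m) :
    ∑ i ∈ Finset.range k, R (d i) * Real.sqrt ((d (i + 1) : ℝ) - (d i : ℝ)) ≤
      2 * Real.sqrt 2 * Real.sqrt (∑ j ∈ Finset.range D, R j) := by
  set S := ∑ j ∈ range D, R j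
  set L : ℕ → ℝ := fun i ↦ (d (i + 1) : ℝ) - d i
  have hL : ∀ i ∈ range k, 0 ≤ L i := fun i hi ↦
    sub_nonneg.mpr (Nat.cast_le.mpr (hstrict i (mem_range.mp hi)).le)
  have hblocks : ∑ i ∈ range k, (1 / 2 : ℝ) ^ i * L i ≤ 2 * S := by
    have h := sum_mul_sub_le_sum_Ico (R := R) (c := fun i ↦ (1 / 2 : ℝ) ^ (i + 1)) k
      (fun i hi ↦ (hstrict i hi).le) fun i hi j hj ↦ (hmin (i + 1) hi j (mem_Ico.mp hj).2).le
    rw [hd0, hdk, ← range_eq_Ico] at h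
    calc ∑ i ∈ range k, (1 / 2 : ℝ) ^ i * L i
        = 2 * ∑ i ∈ range k, (1 / 2 : ℝ) ^ (i + 1) * L i := by
          rw [mul_sum]; exact sum_congr rfl fun i _ ↦ by ring
      _ ≤ 2 * S := by gcongr
  calc ∑ i ∈ range k, R (d i) * √(L i)
      ≤ ∑ i ∈ range k, (1 / 2 : ℝ) ^ i * √(L i) :=
        sum_le_sum fun i hi ↦ mul_le_mul_of_nonneg_right (hle i (mem_range.mp hi)) (sqrt_nonneg _)
    _ ≤ √(∑ i ∈ range k, (1 / 2 : ℝ) ^ i) * √(∑ i ∈ range k, (1 / 2 : ℝ) ^ i * L i) :=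
        sum_mul_sqrt_le_sqrt_sum_mul_sqrt_sum _ (fun i _ ↦ by positivity) hL
    _ ≤ √2 * √(2 * S) := by gcongr; exact sum_geometric_two_le k
    _ = 2 * √S := by rw [sqrt_mul zero_le_two, ← mul_assoc, mul_self_sqrt zero_le_two]
    _ ≤ 2 * √2 * √S := by
        gcongr
        exact le_mul_of_one_le_right zero_le_two (one_le_sqrt.mpr one_le_two)

/-- Subsequence-optimization lemma: for a nonincreasing nonnegative sequence `R` with
`R 0 = 1` and indices `d i` chosen minimal with `R (d i) ≤ 2⁻ⁱ` (last value `d k = D`),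
the weighted sum of square roots of block lengths is at most `2√2 · √(Σ_{d<D} R d)`. -/
theorem subsequence_optimization
    (R : ℕ → ℝ) (hmono : ∀ d, R (d + 1) ≤ R d) (hR0 : R 0 = 1)
    (hnonneg : ∀ d, 0 ≤ R d)
    (D k : ℕ) (hD : 1 ≤ D) (hk : 1 ≤ k)
    (d : ℕ → ℕ) (hd0 : d 0 = 0) (hdk : d k = D)
    (hstrict : ∀ i < k, d i < d (i + 1))
    (hle : ∀ i < k, R (d i) ≤ (1 / 2 : ℝ) ^ i)
    (hmin : ∀ i ≤ k, ∀ m < d i, (1 / 2 : ℝ) ^ i < R m) :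
    ∑ i ∈ Finset.range k, R (d i) * Real.sqrt ((d (i + 1) : ℝ) - (d i : ℝ)) ≤
      2 * Real.sqrt 2 * Real.sqrt (∑ j ∈ Finset.range D, R j) :=
  subsequence_optimization_general R D k d hd0 hdk hstrict hle hmin
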